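/- arXiv:1908.09027 — 4 statements merged into one kernel-verified Lean document; each statement's English description precedes it below -/
import Mathlib

section
/- For all natural numbers n < M, the alternating sum ∑_{i=1}^{M} C(M,i) · C(i-1,n) · (-1)^i equals (-1)^{n+1}, where C(m,n) = 0 whenever n > m. -/
/-!
By Pascal's rule `C(M+1, i) = C(M, i) + C(M, i-1)`, raising `M` by one changes the sum by
`-∑ j, C(M, j) C(j, n) (-1)^j`, which is `(-1)^M` times the `M`-th forward difference of
`x ↦ C(x, n)` at `0`, i.e. `(-1)^M` if `M = n` and `0` otherwise. Hence the sum vanishes for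
`M ≤ n`, becomes `(-1)^(n+1)` at `M = n + 1` and keeps that value from then on.
-/

open Finset

lemma neg_one_pow_mul_neg_one_pow_sub {R : Type*} [Monoid R] [HasDistribNeg R] {j M : ℕ}
    (h : j ≤ M) :
    (-1 : R) ^ M * (-1) ^ (M - j) = (-1) ^ j := by
  rw [← pow_add, show M + (M - j) = (M - j + (M - j)) + j by omega, pow_add,
    (Even.add_self _).neg_one_pow, one_mul]

lemma sum_range_choose_mul_choose_mul_neg_one_pow (M n : ℕ) :
    ∑ j ∈ range (M + 1), (M.choose j : ℤ) * j.choose n * (-1) ^ j =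
      if M = n then (-1) ^ M else 0 := by
  have h := congrArg ((-1) ^ M * ·) (fwdDiff_iter_choose_zero n M)
  simp only [fwdDiff_iter_eq_sum_shift, mul_sum, mul_ite, mul_one, mul_zero] at h
  rw [← h]
  refine sum_congr rfl fun j hj => ?_
  rw [zero_add, smul_eq_mul, nsmul_one, Nat.cast_id,
    ← neg_one_pow_mul_neg_one_pow_sub (Nat.lt_succ_iff.mp (mem_range.mp hj))]
  ring

lemma sum_range_choose_succ_succ_mul_choose_mul_neg_one_pow (M n : ℕ) :
    ∑ j ∈ range (M + 1), ((M + 1).choose (j + 1) : ℤ) * j.choose n * (-1) ^ (j + 1) =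
      ∑ j ∈ range M, (M.choose (j + 1) : ℤ) * j.choose n * (-1) ^ (j + 1) -
        ∑ j ∈ range (M + 1), (M.choose j : ℤ) * j.choose n * (-1) ^ j := by
  simp only [Nat.choose_succ_succ', Nat.cast_add, add_mul, sum_add_distrib]
  rw [sum_range_succ (fun j => (M.choose (j + 1) : ℤ) * _ * _), Nat.choose_succ_self,
    Nat.cast_zero, zero_mul, zero_mul, add_zero]
  simp only [pow_succ, mul_neg, mul_one, sum_neg_distrib]
  ring

lemma sum_range_choose_succ_mul_choose_mul_neg_one_pow (M n : ℕ) :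
    ∑ j ∈ range M, (M.choose (j + 1) : ℤ) * j.choose n * (-1) ^ (j + 1) =
      if n < M then (-1) ^ (n + 1) else 0 := by
  induction M with
  | zero => simp
  | succ M ih =>
    rw [sum_range_choose_succ_succ_mul_choose_mul_neg_one_pow, ih,
      sum_range_choose_mul_choose_mul_neg_one_pow]
    rcases lt_trichotomy n M with hnM | rfl | hMn
    · simp [hnM, hnM.ne', Nat.lt_succ_of_lt hnM]
    · simp [pow_succ]
    · simp [hMn.ne, Nat.not_lt.mpr hMn.le, Nat.not_lt.mpr (Nat.succ_le_of_lt hMn)]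

theorem alternating_sum_binom (M n : ℕ) (h : n < M) :
    ∑ i ∈ Finset.Icc 1 M, (M.choose i : ℤ) * ((i - 1).choose n : ℤ) * (-1) ^ i
      = (-1) ^ (n + 1) := by
  rw [← Ico_add_one_right_eq_Icc, sum_Ico_eq_sum_range, Nat.add_sub_cancel]
  simp only [add_comm 1, Nat.add_sub_cancel]
  rw [sum_range_choose_succ_mul_choose_mul_neg_one_pow, if_pos h]
end

section
/- Define h_{k;e} = (2k+2e+1)!!/(2e-1)!! for k, e ∈ ℕ, where (2m+1)!! = 1·3·5···(2m+1) and (-1)!! = 1. Then for all k₁, k₂ ≥ -1 and e ∈ ℕ, the identity 2(k₁-k₂)·h_{k₁+k₂;e} = h_{k₁;e}·h_{k₂;k₁+e} - h_{k₂;e}·h_{k₁;k₂+e} holds. -/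
/-- `oddDF m = (2m-1)!! = 1·3·…·(2m-1)`, so `oddDF 0 = (-1)!! = 1`. -/
def oddDF (m : ℕ) : ℚ := ∏ j ∈ Finset.range m, (2 * (j : ℚ) + 1)

/-- `hh k e = (2k+2e+1)!!/(2e-1)!!` for `k ≥ -1`, `e ≥ 0`. -/
def hh (k e : ℤ) : ℚ := oddDF (k + e + 1).toNat / oddDF e.toNat

/-!
`h_{k;e}` is the ratio `(2(k+e)+1)!! / (2e-1)!!`, so the product `h_{k₁;e} · h_{k₂;k₁+e}`
telescopes to `(2(k₁+e)+1) · h_{k₁+k₂;e}`. The two products in the identity therefore differ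
by `((2(k₁+e)+1) - (2(k₂+e)+1)) · h_{k₁+k₂;e} = 2(k₁-k₂) · h_{k₁+k₂;e}`.
-/

lemma oddDF_ne_zero (m : ℕ) : oddDF m ≠ 0 :=
  (Finset.prod_pos fun j _ => by positivity).ne'

lemma oddDF_toNat_succ {n : ℤ} (hn : 0 ≤ n) :
    oddDF (n + 1).toNat = oddDF n.toNat * (2 * n + 1) := by
  lift n to ℕ using hn
  simpa [oddDF] using Finset.prod_range_succ (fun j : ℕ => 2 * (j : ℚ) + 1) n

lemma hh_mul_hh {k k' e : ℤ} (hke : 0 ≤ k + e) :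
    hh k e * hh k' (k + e) = (2 * (k + e) + 1) * hh (k + k') e := by
  have hsum : k' + (k + e) + 1 = k + k' + e + 1 := by ring
  unfold hh
  rw [oddDF_toNat_succ hke, hsum]
  field_simp [oddDF_ne_zero]
  push_cast
  ring

theorem h_commutator_identity_general (k₁ k₂ : ℤ) (e : ℕ)
    (h₁e : 0 ≤ k₁ + (e : ℤ)) (h₂e : 0 ≤ k₂ + (e : ℤ)) :
    2 * ((k₁ : ℚ) - k₂) * hh (k₁ + k₂) e
      = hh k₁ e * hh k₂ (k₁ + e) - hh k₂ e * hh k₁ (k₂ + e) := by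
  rw [hh_mul_hh h₁e, hh_mul_hh h₂e, add_comm k₂ k₁]
  push_cast
  ring

theorem h_commutator_identity (k₁ k₂ : ℤ) (e : ℕ)
    (hk₁ : -1 ≤ k₁) (hk₂ : -1 ≤ k₂) (hk₁₂ : -1 ≤ k₁ + k₂)
    (h₁e : 0 ≤ k₁ + (e : ℤ)) (h₂e : 0 ≤ k₂ + (e : ℤ)) :
    2 * ((k₁ : ℚ) - k₂) * hh (k₁ + k₂) e
      = hh k₁ e * hh k₂ (k₁ + e) - hh k₂ e * hh k₁ (k₂ + e) :=
  h_commutator_identity_general k₁ k₂ e h₁e h₂e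
end

section
/- Let e = (e₁,...,eₙ) be a list of natural numbers and c a natural number. With h_{k;·} defined on lists by inclusion-exclusion, the following inductive identity holds: h_{k;(c,e₁,...,eₙ)} = h_{k;c} + ∑_{∅≠J⊆{1,...,n}} ( h_{k;e_J} - h_{k;(c+|e_J|-#J, e_{J^c})} ), where e_J denotes the sublist indexed by J, |e_J| = ∑_{j∈J}e_j, and e_{J^c} is the complementary sublist. -/
/-- Inclusion–exclusion extension of `hh` to a finite list (multiset of position-choices)
of natural numbers: `h_{k;e} = ∑_{∅≠J} (-1)^{#J-1} h_{k; |e_J| - #J + 1}`, where the sum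
over nonempty subsets of positions is realized as the multiset powerset. -/
def hM (k : ℤ) (s : Multiset ℕ) : ℚ :=
  ((s.powerset.filter (fun t => t ≠ 0)).map
    (fun t => (-1 : ℚ) ^ (t.card - 1) * hh k ((t.sum : ℤ) - t.card + 1))).sum

namespace Multiset

variable {α : Type*} [DecidableEq α]

theorem count_zero_powerset (s : Multiset α) : count 0 s.powerset = 1 := by
  induction s using Multiset.induction with
  | empty => simp
  | cons a s ih => simp [powerset_cons, ih]

theorem map_sub_powerset (s : Multiset α) : s.powerset.map (s - ·) = s.powerset := by
  have h := antidiagonal_map_fst s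
  rwa [antidiagonal_eq_map_powerset, map_map] at h

theorem sum_map_filter_powerset_ne_zero {M : Type*} [AddCommGroup M] (s : Multiset α)
    (φ : Multiset α → M) :
    ((s.powerset.filter (· ≠ 0)).map φ).sum = (s.powerset.map φ).sum - φ 0 := by
  have hzero : s.powerset.filter (¬ · ≠ 0) = {0} := by
    simp only [not_not, filter_eq', count_zero_powerset, replicate_one]
  conv_rhs => rw [← filter_add_not (· ≠ 0) s.powerset, hzero]
  simp

theorem sum_powerset_alternating_sum_powerset_sub {R : Type*} [CommRing R]
    (g : Multiset α → R) (s : Multiset α) :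
    (s.powerset.map fun J =>
      ((s - J).powerset.map fun t => (-1 : R) ^ card t * g (J + t)).sum).sum = g 0 := by
  induction s using Multiset.induction with
  | empty => simp
  | cons a s ih =>
    have hle : ∀ J ∈ s.powerset,
        ((a ::ₘ s - J).powerset.map fun t => (-1 : R) ^ card t * g (J + t)).sum =
          ((s - J).powerset.map fun t => (-1 : R) ^ card t * g (J + t)).sum -
            ((s - J).powerset.map fun t => (-1 : R) ^ card t * g (a ::ₘ J + t)).sum := by
      intro J hJ
      rw [cons_sub_of_le a (mem_powerset.mp hJ), powerset_cons, map_add, sum_add, map_map,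
        sub_eq_add_neg, ← sum_map_neg]
      congr 2
      refine map_congr rfl fun t _ => ?_
      simp [pow_succ, add_cons, cons_add]
    have hcons : ∀ J ∈ s.powerset,
        ((a ::ₘ s - a ::ₘ J).powerset.map fun t => (-1 : R) ^ card t * g (a ::ₘ J + t)).sum =
          ((s - J).powerset.map fun t => (-1 : R) ^ card t * g (a ::ₘ J + t)).sum := by
      simp [sub_cons]
    rw [powerset_cons, map_add, sum_add, map_congr rfl hle, map_map, Function.comp_def,
      map_congr rfl hcons, sum_map_sub, ih, sub_add_cancel]

end Multiset

open Multiset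

theorem hM_zero (k : ℤ) : hM k 0 = 0 := by
  simp [hM, filter_singleton]

theorem hM_cons (k : ℤ) (c : ℕ) (e : Multiset ℕ) :
    hM k (c ::ₘ e) = hM k e +
      (e.powerset.map fun t : Multiset ℕ => (-1 : ℚ) ^ card t * hh k (c + t.sum - card t)).sum := by
  rw [hM, powerset_cons, filter_add, Multiset.map_add, sum_add, ← hM,
    filter_eq_self.mpr (by simp), map_map]
  congr 2
  refine map_congr rfl fun t _ => ?_
  simp only [Function.comp_apply, card_cons, sum_cons, Nat.add_sub_cancel]
  push_cast
  ring_nf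

theorem h_inductive_general (k : ℤ) (c : ℕ) (e : Multiset ℕ)
    (hpos : ∀ J ∈ e.powerset, Multiset.card J ≤ c + J.sum) :
    hM k (c ::ₘ e) =
      hh k c +
        ((e.powerset.filter (fun J => J ≠ 0)).map
          (fun J => hM k J - hM k ((c + J.sum - Multiset.card J) ::ₘ (e - J)))).sum := by
  set g : Multiset ℕ → ℚ := fun u : Multiset ℕ => hh k (c + u.sum - card u)
  have hshift : ∀ J ∈ e.powerset, hM k ((c + J.sum - card J) ::ₘ (e - J)) =
      hM k (e - J) + ((e - J).powerset.map fun t => (-1 : ℚ) ^ card t * g (J + t)).sum := by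
    intro J hJ
    rw [hM_cons]
    congr 2
    refine map_congr rfl fun t _ => ?_
    simp only [g, sum_add, card_add, Nat.cast_sub (hpos J hJ)]
    push_cast
    ring_nf
  have hcompl : (e.powerset.map fun J => hM k (e - J)).sum = (e.powerset.map (hM k)).sum := by
    conv_rhs => rw [← map_sub_powerset e, map_map]
    rfl
  rw [map_congr rfl fun J hJ => by rw [hshift J (mem_of_mem_filter hJ), ← sub_sub],
    sum_map_sub, sum_map_sub, sum_map_filter_powerset_ne_zero, sum_map_filter_powerset_ne_zero,
    sum_map_filter_powerset_ne_zero, sum_powerset_alternating_sum_powerset_sub, hcompl, hM_cons]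
  simp only [g, hM_zero, Multiset.sub_zero, zero_add, sum_zero, card_zero, Nat.cast_zero,
    add_zero, sub_zero]
  ring

/-- The inductive identity
`h_{k;(c,e)} = h_{k;c} + ∑_{∅≠J⊆e} ( h_{k;e_J} - h_{k;(c+|e_J|-#J, e_{J^c})} )`. -/
theorem h_inductive (k : ℤ) (hk : -1 ≤ k) (c : ℕ) (e : Multiset ℕ)
    (hpos : ∀ J ∈ e.powerset, Multiset.card J ≤ c + J.sum) :
    hM k (c ::ₘ e) =
      hh k c +
        ((e.powerset.filter (fun J => J ≠ 0)).map
          (fun J => hM k J - hM k ((c + J.sum - Multiset.card J) ::ₘ (e - J)))).sum :=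
  h_inductive_general k c e hpos
end

section
/- Assume the equality of generating functions of finite sets: for weights a₁,...,aₙ, b with each weight in (0,1] and nonempty admissible blocks, the set of admissible partitions satisfies P(b, a₁,...,aₙ) = ⊔_{J ⊆ {1,...,n}, b + ∑_{j∈J}a_j ≤ 1} P(merge(b, a_J), a_{J^c}), where merge(b, a_J) replaces the entries indexed by J and b by the single entry b + ∑_{j∈J}a_j. That is, every admissible partition of (b, a₁,...,aₙ) arises uniquely by choosing the block J containing b and an admissible partition of the remaining entries. -/
/-!
The block of an admissible partition of `(b, a₁, …, aₙ)` that contains the point of weight `b`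
(indexed by `none`) is `insert none (J.image some)` for a unique `J`, and its weight is
`b + ∑_{j ∈ J} a_j`. Removing that block leaves a partition of `(J.image some)ᶜ`, which is the
image under the injection `some` of a unique partition of `Jᶜ`; conversely, adjoining the block to
such an image recovers the partition. Admissibility splits along this correspondence block by block.
-/

open Finset Function

theorem Finset.insert_none_image_some {α : Type*} [DecidableEq α] (J : Finset α) :
    insert none (J.image some) = insertNone J := by
  ext (_ | x) <;> simp

theorem Finset.compl_insert_none_image_some {α : Type*} [Fintype α] [DecidableEq α]
    (J : Finset α) :
    (insert none (J.image some))ᶜ = Jᶜ.image some := by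
  ext (_ | x) <;> simp

namespace Finpartition

variable {α β : Type*} [DecidableEq α] [DecidableEq β]

def image {s : Finset α} (P : Finpartition s) {f : α → β} (hf : Injective f) :
    Finpartition (s.image f) where
  parts := P.parts.image (Finset.image f)
  supIndep := by
    rw [supIndep_iff_pairwiseDisjoint, coe_image,
      (image_injective hf).injOn.pairwiseDisjoint_image]
    exact fun t ht u hu htu => (disjoint_image hf).2 (P.disjoint ht hu htu)
  sup_parts := by
    conv_rhs => rw [← P.sup_parts]
    simp [sup_eq_biUnion, biUnion_image]
  bot_notMem := by simp [P.empty_notMem_parts]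

@[simp]
theorem parts_image {s : Finset α} (P : Finpartition s) {f : α → β} (hf : Injective f) :
    (P.image hf).parts = P.parts.image (Finset.image f) := rfl

theorem image_injective {s : Finset α} {f : α → β} (hf : Injective f) :
    Injective (fun P : Finpartition s => P.image hf) := fun _ _ h =>
  Finpartition.ext <| (Finset.image_injective (Finset.image_injective hf)) (congrArg parts h)

theorem image_surjective {s : Finset α} {f : α → β} (hf : Injective f) :
    Surjective (fun P : Finpartition s => P.image hf) := by
  intro P
  have hsub : ∀ t ∈ P.parts, (t.preimage f hf.injOn).image f = t := fun t ht => by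
    classical
    rw [image_preimage, filter_true_of_mem]
    intro y hy
    obtain ⟨x, -, rfl⟩ := mem_image.1 (P.le ht hy)
    exact Set.mem_range_self x
  refine ⟨ofExistsUnique (P.parts.image (preimage · f hf.injOn)) ?_ ?_ ?_, Finpartition.ext ?_⟩
  · simp only [mem_image, forall_exists_index, and_imp, forall_apply_eq_imp_iff₂]
    exact fun t ht => preimage_subset_of_subset_image (P.le ht)
  · intro x hx
    obtain ⟨t, ⟨ht, hxt⟩, huniq⟩ := P.existsUnique_mem (mem_image_of_mem f hx)
    refine ⟨t.preimage f hf.injOn, ⟨mem_image_of_mem _ ht, mem_preimage.2 hxt⟩, ?_⟩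
    rintro _ ⟨hmem, hxu⟩
    obtain ⟨u, hu, rfl⟩ := mem_image.1 hmem
    rw [huniq u ⟨hu, mem_preimage.1 hxu⟩]
  · simp only [mem_image, not_exists, not_and]
    intro t ht hempty
    exact P.ne_empty ht (by rw [← hsub t ht, hempty, Finset.image_empty])
  · simp only [parts_image, ofExistsUnique_parts, Finset.image_image]
    exact (image_congr hsub).trans image_id

theorem parts_avoid_of_mem {s t : Finset α} (P : Finpartition s) (ht : t ∈ P.parts) :
    (P.avoid t).parts = P.parts.erase t := by
  ext u
  rw [mem_avoid, mem_erase]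
  constructor
  · rintro ⟨v, hv, hvt, rfl⟩
    have hne : v ≠ t := by rintro rfl; exact hvt le_rfl
    have hdisj : Disjoint v t := P.disjoint hv ht hne
    rw [hdisj.sdiff_eq_left]
    exact ⟨hne, hv⟩
  · rintro ⟨hne, hu⟩
    have hdisj : Disjoint u t := P.disjoint hu ht hne
    refine ⟨u, hu, fun hle => P.ne_bot hu (hdisj.eq_bot_of_le hle), hdisj.sdiff_eq_left⟩

section OptionBlock

variable {α : Type*} [Fintype α] [DecidableEq α]

-- The block `insert none (J.image some)` is the paper's merged point `merge(b, a_J)`.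
def ofNoneBlock (J : Finset α) (q : Finpartition Jᶜ) :
    Finpartition (univ : Finset (Option α)) :=
  (q.image (Option.some_injective α)).extend (insert_ne_empty _ _)
    (by rw [← compl_insert_none_image_some]; exact disjoint_compl_left)
    (by rw [← compl_insert_none_image_some]; exact compl_sup_eq_top)

theorem parts_ofNoneBlock (J : Finset α) (q : Finpartition Jᶜ) :
    (ofNoneBlock J q).parts =
      insert (insert none (J.image some)) (q.parts.image (Finset.image some)) :=
  rfl

theorem eq_of_ofNoneBlock_eq {J J' : Finset α} {q : Finpartition Jᶜ}
    {q' : Finpartition J'ᶜ} (h : ofNoneBlock J q = ofNoneBlock J' q') : J = J' := by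
  have hpart : ∀ (J : Finset α) (q : Finpartition Jᶜ),
      (ofNoneBlock J q).part none = insert none (J.image some) := fun J q =>
    (ofNoneBlock J q).part_eq_of_mem (by simp [parts_ofNoneBlock]) (mem_insert_self _ _)
  apply insertNone.injective
  rw [← insert_none_image_some, ← insert_none_image_some, ← hpart J q, ← hpart J' q', h]

theorem ofNoneBlock_injective (J : Finset α) : Injective (ofNoneBlock J) := by
  intro q q' h
  have hnone : ∀ q : Finpartition Jᶜ,
      insert none (J.image some) ∉ q.parts.image (Finset.image some) := by
    simp only [mem_image, not_exists, not_and]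
    intro q x _ hx
    have hmem : none ∈ x.image some := hx ▸ mem_insert_self none (J.image some)
    simp at hmem
  have hparts := congrArg Finpartition.parts h
  rw [parts_ofNoneBlock, parts_ofNoneBlock] at hparts
  apply image_injective (Option.some_injective α)
  apply Finpartition.ext
  rw [parts_image, parts_image, ← erase_insert (hnone q), hparts, erase_insert (hnone q')]

theorem exists_ofNoneBlock_eq (p : Finpartition (univ : Finset (Option α))) :
    ∃ (J : Finset α) (q : Finpartition Jᶜ), ofNoneBlock J q = p := by
  set t := p.part none
  have ht : t ∈ p.parts := p.part_mem.2 (mem_univ _)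
  have hJ : insert none ((eraseNone t).image some) = t := by
    rw [image_some_eraseNone, insert_erase (p.mem_part_self.2 (mem_univ _))]
  have hrest : univ \ t = (eraseNone t)ᶜ.image some := by
    rw [← compl_eq_univ_sdiff, ← compl_insert_none_image_some, hJ]
  obtain ⟨q, hq⟩ : ∃ q : Finpartition (eraseNone t)ᶜ,
      q.image (Option.some_injective α) = (p.avoid t).copy hrest :=
    image_surjective (Option.some_injective α) _
  refine ⟨eraseNone t, q, Finpartition.ext ?_⟩
  rw [parts_ofNoneBlock, hJ, ← parts_image q (Option.some_injective α), hq, copy_parts,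
    parts_avoid_of_mem p ht, insert_erase ht]

theorem ofNoneBlock_admissible_iff (a : α → ℝ) (b : ℝ) {J : Finset α} {q : Finpartition Jᶜ} :
    (∀ s ∈ (ofNoneBlock J q).parts, ∑ i ∈ s, Option.elim i b a ≤ 1) ↔
      b + ∑ j ∈ J, a j ≤ 1 ∧ ∀ s ∈ q.parts, ∑ j ∈ s, a j ≤ 1 := by
  simp [parts_ofNoneBlock, sum_image]

end OptionBlock

end Finpartition

open Finpartition

-- The paper's `P(·)`.
abbrev AdmissiblePartition {ι : Type*} [DecidableEq ι] (w : ι → ℝ) (s : Finset ι) : Type _ :=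
  {p : Finpartition s // ∀ t ∈ p.parts, ∑ i ∈ t, w i ≤ 1}

namespace AdmissiblePartition

variable {α : Type*} [Fintype α] [DecidableEq α] (a : α → ℝ) (b : ℝ)

def ofNoneBlock :
    (Σ J : {J : Finset α // b + ∑ j ∈ J, a j ≤ 1}, AdmissiblePartition a J.1ᶜ) →
      AdmissiblePartition (fun i => Option.elim i b a) univ :=
  fun x =>
    ⟨Finpartition.ofNoneBlock x.1.1 x.2.1, (ofNoneBlock_admissible_iff a b).2 ⟨x.1.2, x.2.2⟩⟩

theorem ofNoneBlock_bijective : Bijective (ofNoneBlock a b) := by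
  constructor
  · rintro ⟨⟨J, _⟩, q, _⟩ ⟨⟨J', _⟩, q', _⟩ h
    have h' : Finpartition.ofNoneBlock J q = Finpartition.ofNoneBlock J' q' :=
      congrArg Subtype.val h
    obtain rfl := eq_of_ofNoneBlock_eq h'
    obtain rfl := ofNoneBlock_injective J h'
    rfl
  · rintro ⟨p, hp⟩
    obtain ⟨J, q, rfl⟩ := exists_ofNoneBlock_eq p
    obtain ⟨hJ, hq⟩ := (ofNoneBlock_admissible_iff a b).1 hp
    exact ⟨⟨⟨J, hJ⟩, q, hq⟩, rfl⟩

end AdmissiblePartition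

theorem admissible_partition_decomposition_general (n : ℕ) (a : Fin n → ℝ) (b : ℝ) :
    ∃ e : {p : Finpartition (Finset.univ : Finset (Option (Fin n))) //
            ∀ s ∈ p.parts, ∑ i ∈ s, Option.elim i b a ≤ 1} ≃
          Σ J : {J : Finset (Fin n) // b + ∑ j ∈ J, a j ≤ 1},
            {q : Finpartition (J.1ᶜ : Finset (Fin n)) //
              ∀ s ∈ q.parts, ∑ j ∈ s, a j ≤ 1},
      ∀ p : {p : Finpartition (Finset.univ : Finset (Option (Fin n))) //
              ∀ s ∈ p.parts, ∑ i ∈ s, Option.elim i b a ≤ 1},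
        insert none (((e p).1.1).image some) ∈ p.1.parts ∧
        ∀ s ∈ ((e p).2.1).parts, s.image some ∈ p.1.parts := by
  let e := Equiv.ofBijective _ (AdmissiblePartition.ofNoneBlock_bijective a b)
  refine ⟨e.symm, fun p => ?_⟩
  have hp : ofNoneBlock (e.symm p).1.1 (e.symm p).2.1 = p.1 :=
    congrArg Subtype.val (e.apply_symm_apply p)
  rw [← hp, parts_ofNoneBlock]
  exact ⟨mem_insert_self _ _, fun s hs => mem_insert_of_mem (mem_image_of_mem _ hs)⟩

/-- Every admissible partition of the weighted points `(b, a₁, …, aₙ)` arises uniquely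
from the choice of the block `J` containing `b` (with `b + ∑_{j∈J} a_j ≤ 1`) together
with an admissible partition of the remaining points:
`P(b, a₁,…,aₙ) = ⊔_J P(merge(b, a_J), a_{J^c})`. -/
theorem admissible_partition_decomposition (n : ℕ) (a : Fin n → ℝ) (b : ℝ)
    (ha : ∀ i, 0 < a i ∧ a i ≤ 1) (hb : 0 < b ∧ b ≤ 1) :
    ∃ e : {p : Finpartition (Finset.univ : Finset (Option (Fin n))) //
            ∀ s ∈ p.parts, ∑ i ∈ s, Option.elim i b a ≤ 1} ≃
          Σ J : {J : Finset (Fin n) // b + ∑ j ∈ J, a j ≤ 1},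
            {q : Finpartition (J.1ᶜ : Finset (Fin n)) //
              ∀ s ∈ q.parts, ∑ j ∈ s, a j ≤ 1},
      ∀ p : {p : Finpartition (Finset.univ : Finset (Option (Fin n))) //
              ∀ s ∈ p.parts, ∑ i ∈ s, Option.elim i b a ≤ 1},
        insert none (((e p).1.1).image some) ∈ p.1.parts ∧
        ∀ s ∈ ((e p).2.1).parts, s.image some ∈ p.1.parts :=
  admissible_partition_decomposition_general n a b
end
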